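/- arXiv:2503.23754 — 2 statements merged into one kernel-verified Lean document; each statement's English description precedes it below -/
import Mathlib

section
/- Let 0 < r < 1 and let T be an invertible bounded operator on a complex Hilbert space H. Then T belongs to QA_r if and only if the operator (r⁻²+r²)·I − T*T − T⁻¹T⁻* is positive (i.e. (r⁻²+r²)‖x‖² − ‖Tx‖² − ‖T⁻*x‖² ≥ 0 for all x ∈ H). -/
open ContinuousLinearMap
open scoped InnerProductSpace

variable {H : Type*} [NormedAddCommGroup H] [InnerProductSpace ℂ H] [CompleteSpace H]

/-- `T ∈ C_{1,r}`: `T` is invertible, `‖T‖ ≤ 1` and `‖r • T⁻¹‖ ≤ 1`. -/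
def MemC1r (r : ℝ) (T : H →L[ℂ] H) : Prop :=
  IsUnit T ∧ ‖T‖ ≤ 1 ∧ ‖(r : ℂ) • Ring.inverse T‖ ≤ 1

/-- `T ∈ QA_r`: `T` is invertible, `‖r • T‖ ≤ 1` and `‖r • T⁻¹‖ ≤ 1`. -/
def MemQA (r : ℝ) (T : H →L[ℂ] H) : Prop :=
  IsUnit T ∧ ‖(r : ℂ) • T‖ ≤ 1 ∧ ‖(r : ℂ) • Ring.inverse T‖ ≤ 1

private lemma rclike_ofReal_eq_complex_ofReal (x : ℝ) :
    (RCLike.ofReal x : ℂ) = Complex.ofReal x := rfl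

/-- Scalar lemma used in the converse direction. -/
lemma quad_scalar_aux (r s n a b : ℝ) (hr0 : 0 < r) (hr1 : r < 1) (hs : r * s = 1)
    (ha : 0 ≤ a) (hn : 0 ≤ n) (hb : 0 ≤ b)
    (hab : n ^ 2 ≤ a * b) (hsum : a ^ 2 + b ^ 2 ≤ (s ^ 2 + r ^ 2) * n ^ 2) :
    r * a ≤ n := by
  have hs1 : 1 < s := by
    rcases lt_or_ge 1 s with h | h
    · exact h
    · nlinarith
  have hspos : 0 < s := lt_trans zero_lt_one hs1
  by_contra hcon
  push_neg at hcon
  have h1 : n ^ 2 < r ^ 2 * a ^ 2 := by nlinarith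
  have h2' := mul_lt_mul_of_pos_left h1 (by positivity : (0:ℝ) < s ^ 2)
  have e : s ^ 2 * (r ^ 2 * a ^ 2) = a ^ 2 := by
    linear_combination (r * s + 1) * a ^ 2 * hs
  have h2 : s ^ 2 * n ^ 2 < a ^ 2 := by linarith
  have h4 : n ^ 2 * n ^ 2 ≤ (a * b) * (a * b) := mul_self_le_mul_self (sq_nonneg n) hab
  have h5 : a ^ 2 * b ^ 2 ≤ a ^ 2 * ((s ^ 2 + r ^ 2) * n ^ 2 - a ^ 2) :=
    mul_le_mul_of_nonneg_left (by linarith) (sq_nonneg a)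
  have h6 : 0 < a ^ 2 - s ^ 2 * n ^ 2 := by linarith
  have hsr : r ^ 2 * n ^ 2 ≤ s ^ 2 * n ^ 2 := by
    nlinarith [sq_nonneg n, mul_pos (show (0:ℝ) < s - r by linarith)
      (show (0:ℝ) < s + r by linarith)]
  have h7 : 0 < a ^ 2 - r ^ 2 * n ^ 2 := by linarith
  have key := mul_pos h6 h7
  have e2 : (a ^ 2 - s ^ 2 * n ^ 2) * (a ^ 2 - r ^ 2 * n ^ 2)
      = a ^ 2 * a ^ 2 - (s ^ 2 + r ^ 2) * n ^ 2 * a ^ 2 + n ^ 2 * n ^ 2 := by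
    linear_combination (r * s + 1) * n ^ 2 * n ^ 2 * hs
  nlinarith [key, h4, h5, e2]

set_option maxHeartbeats 1600000

theorem stmt3 (r : ℝ) (hr0 : 0 < r) (hr1 : r < 1) (T : H →L[ℂ] H) (hT : IsUnit T) :
    MemQA r T ↔
      ∀ x : H, 0 ≤ (r⁻¹ ^ 2 + r ^ 2) * ‖x‖ ^ 2 - ‖T x‖ ^ 2 -
        ‖adjoint (Ring.inverse T) x‖ ^ 2 := by
  set S := Ring.inverse T with hSdef
  have hST : S * T = 1 := Ring.inverse_mul_cancel T hT
  have hTS : T * S = 1 := Ring.mul_inverse_cancel T hT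
  have hSTx : ∀ x, S (T x) = x := by
    intro x
    have := congrArg (fun f : H →L[ℂ] H => f x) hST
    simpa [mul_apply] using this
  have hadj1 : ∀ y, adjoint S (adjoint T y) = y := by
    intro y
    have h1 : adjoint S ∘L adjoint T = 1 := by
      rw [← adjoint_comp]
      have h2 : T ∘L S = 1 := hTS
      rw [h2, ← star_eq_adjoint, star_one]
    have := congrArg (fun f : H →L[ℂ] H => f y) h1
    simpa using this
  -- inner product identity: ⟪T x, S† x⟫ = ‖x‖²
  have hinner : ∀ x : H, ⟪T x, adjoint S x⟫_ℂ = ((‖x‖ ^ 2 : ℝ) : ℂ) := by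
    intro x
    rw [adjoint_inner_right, hSTx]
    exact_mod_cast inner_self_eq_norm_sq_to_K x
  have hs : r * r⁻¹ = 1 := mul_inv_cancel₀ hr0.ne'
  have hs0 : (0:ℝ) < r⁻¹ := inv_pos.mpr hr0
  have hnormadj : ∀ A : H →L[ℂ] H, ‖adjoint A‖ = ‖A‖ := fun A =>
    (adjoint : (H →L[ℂ] H) ≃ₗᵢ⋆[ℂ] (H →L[ℂ] H)).norm_map A
  have hr4 : 0 < 1 - r ^ 4 := by nlinarith [pow_lt_one₀ hr0.le hr1 (by norm_num : (4:ℕ) ≠ 0)]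
  constructor
  · rintro ⟨-, h2, h3⟩
    -- pointwise bounds
    have haT : ∀ y, r * ‖T y‖ ≤ ‖y‖ := by
      intro y
      have h := ((r:ℂ) • T).le_opNorm y
      rw [smul_apply, norm_smul, Complex.norm_real, Real.norm_eq_abs,
        abs_of_pos hr0] at h
      calc r * ‖T y‖ ≤ ‖(r:ℂ) • T‖ * ‖y‖ := h
        _ ≤ 1 * ‖y‖ := by gcongr
        _ = ‖y‖ := one_mul _
    have haS : ∀ y, r * ‖S y‖ ≤ ‖y‖ := by
      intro y
      have h := ((r:ℂ) • S).le_opNorm y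
      rw [smul_apply, norm_smul, Complex.norm_real, Real.norm_eq_abs,
        abs_of_pos hr0] at h
      calc r * ‖S y‖ ≤ ‖(r:ℂ) • S‖ * ‖y‖ := h
        _ ≤ 1 * ‖y‖ := by gcongr
        _ = ‖y‖ := one_mul _
    have hlow : ∀ y, r * ‖y‖ ≤ ‖T y‖ := by
      intro y
      have := haS (T y)
      rwa [hSTx] at this
    have hadjS : ∀ y, ‖adjoint S y‖ ≤ r⁻¹ * ‖y‖ := by
      intro y
      have hSnorm : ‖S‖ ≤ r⁻¹ := by
        apply opNorm_le_bound _ (le_of_lt hs0)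
        intro z
        have h := haS z
        calc ‖S z‖ = r⁻¹ * (r * ‖S z‖) := by
              rw [← mul_assoc, inv_mul_cancel₀ hr0.ne', one_mul]
          _ ≤ r⁻¹ * ‖z‖ := mul_le_mul_of_nonneg_left h hs0.le
      calc ‖adjoint S y‖ ≤ ‖adjoint S‖ * ‖y‖ := le_opNorm _ y
        _ ≤ r⁻¹ * ‖y‖ := by rw [hnormadj]; gcongr
    intro x
    -- the operator C = 1 - r² T†T and its quadratic form
    set C : H →L[ℂ] H := 1 - ((r:ℂ)^2) • (adjoint T ∘L T) with hC
    have hCapp : ∀ y, C y = y - ((r:ℂ)^2) • adjoint T (T y) := by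
      intro y; simp [hC]
    have hCform : ∀ y : H, ⟪C y, y⟫_ℂ = ((‖y‖^2 - r^2 * ‖T y‖^2 : ℝ) : ℂ) := by
      intro y
      rw [hCapp, inner_sub_left, inner_smul_left, adjoint_inner_left,
        inner_self_eq_norm_sq_to_K, inner_self_eq_norm_sq_to_K]
      simp only [map_pow, Complex.conj_ofReal, rclike_ofReal_eq_complex_ofReal]
      push_cast
      ring
    have hCre : ∀ y : H, (⟪C y, y⟫_ℂ).re = ‖y‖^2 - r^2 * ‖T y‖^2 := by
      intro y
      rw [hCform, Complex.ofReal_re]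
    have hCsa : ∀ u v, ⟪C u, v⟫_ℂ = ⟪u, C v⟫_ℂ := by
      intro u v
      rw [hCapp, hCapp, inner_sub_left, inner_sub_right, inner_smul_left,
        inner_smul_right, adjoint_inner_left, adjoint_inner_right]
      norm_num
    have hf0 : ∀ y, 0 ≤ ‖y‖^2 - r^2 * ‖T y‖^2 := by
      intro y
      have h := mul_self_le_mul_self (by positivity) (haT y)
      nlinarith [h]
    have hfs : ∀ y, ‖y‖^2 - r^2 * ‖T y‖^2 ≤ (1 - r^4) * ‖y‖^2 := by
      intro y
      have h := mul_self_le_mul_self (by positivity) (hlow y)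
      nlinarith [h]
    set q := ‖C x‖^2 with hq
    set p := ‖x‖^2 - r^2 * ‖T x‖^2 with hp
    set m := ‖C x‖^2 - r^2 * ‖T (C x)‖^2 with hm
    have hquad : ∀ t : ℝ, 0 ≤ m * (t * t) + (2*q) * t + p := by
      intro t
      have h0 := hf0 (x + (t:ℂ) • C x)
      rw [← hCre (x + (t:ℂ) • C x)] at h0
      have hexp : ⟪C (x + (t:ℂ) • C x), x + (t:ℂ) • C x⟫_ℂ
          = ⟪C x, x⟫_ℂ + (t:ℂ) * ⟪C x, C x⟫_ℂ + (t:ℂ) * ⟪C (C x), x⟫_ℂ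
            + ((t * t : ℝ) : ℂ) * ⟪C (C x), C x⟫_ℂ := by
        rw [map_add, map_smul, inner_add_left, inner_add_right, inner_add_right,
          inner_smul_left, inner_smul_right, inner_smul_left, inner_smul_right]
        simp only [Complex.conj_ofReal]
        push_cast
        ring
      rw [hexp, hCsa (C x) x] at h0
      simp only [Complex.add_re, Complex.re_ofReal_mul] at h0
      have e1 : (⟪C x, x⟫_ℂ).re = p := hCre x
      have e2 : (⟪C x, C x⟫_ℂ).re = q := by
        simpa using inner_self_eq_norm_sq (𝕜 := ℂ) (C x)
      have e4 : (⟪C (C x), C x⟫_ℂ).re = m := hCre (C x)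
      rw [e1, e2, e4] at h0
      linarith
    have hdisc := discrim_le_zero hquad
    rw [discrim] at hdisc
    have hmq : m ≤ (1 - r^4) * q := by
      have h := hfs (C x)
      simpa [hm, hq] using h
    have hp0 : 0 ≤ p := hf0 x
    have hq0 : 0 ≤ q := by positivity
    have hkey : q ≤ (1 - r^4) * p := by
      rcases eq_or_lt_of_le hq0 with h | h
      · rw [← h]; positivity
      · nlinarith [hdisc, hmq, hp0, h]
    -- translate back
    have hwadj : adjoint S (C x) = adjoint S x - (r:ℂ)^2 • T x := by
      rw [hCapp, map_sub, map_smul, hadj1]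
    have hv2 : ‖adjoint S x - (r:ℂ)^2 • T x‖^2
        = ‖adjoint S x‖^2 - 2 * (r^2 * ‖x‖^2) + (r^2 * ‖T x‖)^2 := by
      rw [norm_sub_sq (𝕜 := ℂ)]
      have h1 : ‖(r:ℂ)^2 • T x‖ = r^2 * ‖T x‖ := by
        rw [norm_smul, norm_pow, Complex.norm_real, Real.norm_eq_abs, abs_of_pos hr0]
      have hconj : ⟪adjoint S x, T x⟫_ℂ = ((‖x‖^2 : ℝ) : ℂ) := by
        rw [← inner_conj_symm, hinner, Complex.conj_ofReal]
      have h2 : RCLike.re (⟪adjoint S x, ((r:ℂ)^2) • T x⟫_ℂ) = r^2 * ‖x‖^2 := by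
        rw [inner_smul_right, hconj]
        have he : (r:ℂ)^2 * ((‖x‖^2 : ℝ) : ℂ) = ((r^2 * ‖x‖^2 : ℝ) : ℂ) := by
          push_cast; ring
        rw [he]
        simp only [RCLike.re_to_complex, Complex.ofReal_re]
      rw [h1, h2]
    have hineq : ‖adjoint S x‖^2 - 2*(r^2*‖x‖^2) + (r^2*‖T x‖)^2
        ≤ r⁻¹^2 * ((1-r^4) * p) := by
      calc ‖adjoint S x‖^2 - 2*(r^2*‖x‖^2) + (r^2*‖T x‖)^2
          = ‖adjoint S (C x)‖^2 := by rw [hwadj, hv2]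
        _ ≤ (r⁻¹ * ‖C x‖)^2 := by
            apply sq_le_sq' _ (hadjS (C x))
            have h := norm_nonneg (adjoint S (C x))
            have h2 := mul_nonneg hs0.le (norm_nonneg (C x))
            linarith
        _ = r⁻¹^2 * q := by rw [hq]; ring
        _ ≤ r⁻¹^2 * ((1-r^4) * p) := by
            exact mul_le_mul_of_nonneg_left hkey (by positivity)
    have e1 : r⁻¹^2 * r^2 = 1 := by field_simp
    have hexp2 : r⁻¹^2 * ((1-r^4) * p)
        = r⁻¹^2*‖x‖^2 - ‖T x‖^2 - r^2*‖x‖^2 + r^4*‖T x‖^2 := by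
      rw [hp]
      linear_combination (-‖T x‖^2 - r^2*‖x‖^2 + r^4*‖T x‖^2) * e1
    rw [hexp2] at hineq
    linarith
  · intro h
    have hab : ∀ x : H, ‖x‖^2 ≤ ‖T x‖ * ‖adjoint S x‖ := by
      intro x
      have hcs := norm_inner_le_norm (𝕜 := ℂ) (T x) (adjoint S x)
      rw [hinner] at hcs
      calc ‖x‖^2 = ‖((‖x‖^2 : ℝ) : ℂ)‖ := by
            rw [Complex.norm_real, Real.norm_eq_abs, abs_of_nonneg (by positivity)]
        _ ≤ ‖T x‖ * ‖adjoint S x‖ := hcs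
    refine ⟨hT, ?_, ?_⟩
    · apply opNorm_le_bound _ zero_le_one
      intro x
      rw [smul_apply, norm_smul, Complex.norm_real, Real.norm_eq_abs,
        abs_of_pos hr0, one_mul]
      have hx := h x
      exact quad_scalar_aux r r⁻¹ ‖x‖ ‖T x‖ ‖adjoint S x‖ hr0 hr1 hs
        (norm_nonneg _) (norm_nonneg _) (norm_nonneg _) (hab x) (by linarith)
    · have hbb : ∀ x, r * ‖adjoint S x‖ ≤ ‖x‖ := by
        intro x
        have hx := h x
        exact quad_scalar_aux r r⁻¹ ‖x‖ ‖adjoint S x‖ ‖T x‖ hr0 hr1 hs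
          (norm_nonneg _) (norm_nonneg _) (norm_nonneg _)
          (by rw [mul_comm]; exact hab x) (by linarith)
      have hadjnorm : ‖adjoint S‖ ≤ r⁻¹ := by
        apply opNorm_le_bound _ (le_of_lt hs0)
        intro y
        have hy := hbb y
        calc ‖adjoint S y‖ = r⁻¹ * (r * ‖adjoint S y‖) := by
              rw [← mul_assoc, inv_mul_cancel₀ hr0.ne', one_mul]
          _ ≤ r⁻¹ * ‖y‖ := mul_le_mul_of_nonneg_left hy hs0.le
      have : ‖(r:ℂ) • S‖ = r * ‖S‖ := by
        rw [norm_smul, Complex.norm_real, Real.norm_eq_abs, abs_of_pos hr0]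
      rw [this, ← hnormadj S]
      calc r * ‖adjoint S‖ ≤ r * r⁻¹ := by gcongr
        _ = 1 := hs
end

section
/- Let 0 < r < 1 and let A, B be invertible bounded operators in C_{1,r} on a complex Hilbert space H that doubly commute (AB = BA and AB* = B*A). Let H₁ be the maximal closed subspace of H reducing A on which (1+r²)‖x‖² = ‖Ax‖² + r²‖A⁻*x‖² holds for all x ∈ H₁, and let H₂ = H ⊖ H₁ be its orthogonal complement. Then H₁ and H₂ are reducing subspaces for B, i.e. BH₁ ⊆ H₁, B*H₁ ⊆ H₁, BH₂ ⊆ H₂, and B*H₂ ⊆ H₂. -/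
open ContinuousLinearMap

variable {H : Type*} [NormedAddCommGroup H] [InnerProductSpace ℂ H] [CompleteSpace H]

/-- A closed subspace `L` reduces `T` if `L` is invariant under both `T` and `T*`. -/
def Reduces (T : H →L[ℂ] H) (L : Submodule ℂ H) : Prop :=
  ∀ x ∈ L, T x ∈ L ∧ adjoint T x ∈ L

/-- `T` restricted to `L` is of class `𝒞_{1,r}`:
`(1+r²)‖x‖² = ‖Tx‖² + r²‖T⁻*x‖²` for all `x ∈ L`. -/
def RestrictedScriptC1r (r : ℝ) (T : H →L[ℂ] H) (L : Submodule ℂ H) : Prop :=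
  ∀ x ∈ L, (1 + r ^ 2) * ‖x‖ ^ 2 = ‖T x‖ ^ 2 + r ^ 2 * ‖adjoint (Ring.inverse T) x‖ ^ 2

/-! The defect operator `D = (1 + r²) - A*A - r² A⁻¹A⁻*` has quadratic form
`(1 + r²)‖x‖² - ‖Ax‖² - r²‖A⁻*x‖²`, and it is nonnegative for `A ∈ C_{1,r}`: with `P = A*A` one
has `r² ≤ P ≤ 1` and `D = (1 - P)(P - r²)P⁻¹`, a product of commuting nonnegative operators.
Hence `H₁` is the largest `A`-reducing subspace of `ker D`, namely the set of `x` with `D W x = 0`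
for every `W` in the unital *-algebra generated by `A`. An operator commuting with `A` and `A*`
commutes with that algebra and with `D`, so it preserves this subspace; applying this to `B` and
`B*` gives the claim for `H₁`, and taking adjoints gives it for `H₁ᗮ`. -/

theorem Commute.ringInverse_right {M₀ : Type*} [MonoidWithZero M₀] {a b : M₀}
    (h : Commute a b) : Commute a (Ring.inverse b) := by
  by_cases hb : IsUnit b
  · obtain ⟨u, rfl⟩ := hb
    simpa only [Ring.inverse_unit] using h.units_inv_right
  · simp only [Ring.inverse_non_unit b hb, Commute.zero_right]

theorem StarSubalgebra.ringInverse_mem_centralizer {R A : Type*} [CommSemiring R] [StarRing R]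
    [Ring A] [StarRing A] [Algebra R A] [StarModule R A] {s : Set A} {a : A}
    (ha : a ∈ StarSubalgebra.centralizer R s) :
    Ring.inverse a ∈ StarSubalgebra.centralizer R s := by
  rw [StarSubalgebra.mem_centralizer_iff] at ha ⊢
  exact fun g hg ↦
    ⟨Commute.ringInverse_right (ha g hg).1, Commute.ringInverse_right (ha g hg).2⟩

theorem CStarAlgebra.star_mul_le_one {A : Type*} [CStarAlgebra A] [PartialOrder A]
    [StarOrderedRing A] {a : A} (ha : ‖a‖ ≤ 1) : star a * a ≤ 1 := by
  refine CStarAlgebra.star_mul_le_algebraMap_norm_sq.trans ?_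
  simpa using algebraMap_mono A (pow_le_one₀ (norm_nonneg a) ha)

namespace ContinuousLinearMap

theorem re_inner_apply_self_eq_zero_iff {D : H →L[ℂ] H} (hD : 0 ≤ D) {x : H} :
    RCLike.re (inner ℂ (D x) x) = 0 ↔ D x = 0 := by
  refine ⟨fun hx ↦ ?_, fun hx ↦ by simp [hx]⟩
  obtain ⟨S, rfl⟩ := CStarAlgebra.nonneg_iff_eq_star_mul_self.mp hD
  have hSx : S x = 0 := by
    rw [mul_apply_eq_comp, star_eq_adjoint, adjoint_inner_left,
      inner_self_eq_norm_sq] at hx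
    simpa using hx
  simp [hSx]

end ContinuousLinearMap

theorem Reduces.orthogonal {C : H →L[ℂ] H} {L : Submodule ℂ H} (hL : Reduces C L) :
    Reduces C Lᗮ := by
  intro x hx
  rw [Submodule.mem_orthogonal] at hx
  refine ⟨(Submodule.mem_orthogonal _ _).2 fun u hu ↦ ?_,
    (Submodule.mem_orthogonal _ _).2 fun u hu ↦ ?_⟩
  · rw [← adjoint_inner_left]
    exact hx _ (hL u hu).2
  · rw [adjoint_inner_right]
    exact hx _ (hL u hu).1

theorem Reduces.of_mem_adjoin {T W : H →L[ℂ] H} {L : Submodule ℂ H} (hT : Reduces T L)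
    (hW : W ∈ StarAlgebra.adjoin ℂ {T}) : Reduces W L := by
  induction hW using StarAlgebra.adjoin_induction with
  | mem _ hx => rwa [Set.mem_singleton_iff.mp hx]
  | algebraMap c =>
    intro x hx
    rw [Algebra.algebraMap_eq_smul_one]
    exact ⟨by simpa using L.smul_mem c hx,
      by simpa [← star_eq_adjoint, star_smul] using L.smul_mem (star c) hx⟩
  | add X Y _ _ hX hY =>
    intro x hx
    simpa using ⟨L.add_mem (hX x hx).1 (hY x hx).1, L.add_mem (hX x hx).2 (hY x hx).2⟩
  | mul X Y _ _ hX hY =>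
    intro x hx
    refine ⟨(hX _ (hY x hx).1).1, ?_⟩
    rw [← star_eq_adjoint, star_mul, mul_apply_eq_comp]
    exact (hY _ (hX x hx).2).2
  | star X _ hX =>
    intro x hx
    simpa [star_eq_adjoint] using (hX x hx).symm

theorem reduces_ker_of_mem_centralizer {C D : H →L[ℂ] H}
    (hD : D ∈ StarSubalgebra.centralizer ℂ {C}) :
    Reduces C (LinearMap.ker (D : H →ₗ[ℂ] H)) := by
  rw [StarSubalgebra.mem_centralizer_iff] at hD
  obtain ⟨hC, hC'⟩ := hD C rfl
  intro x hx
  simp only [LinearMap.mem_ker, coe_coe] at hx ⊢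
  exact ⟨by rw [← mul_apply_eq_comp, ← hC, mul_apply_eq_comp, hx, map_zero],
    by rw [← star_eq_adjoint, ← mul_apply_eq_comp, ← hC', mul_apply_eq_comp, hx, map_zero]⟩

noncomputable def maxReducingSubspace (T : H →L[ℂ] H) (K : Submodule ℂ H) : Submodule ℂ H :=
  ⨅ W ∈ StarAlgebra.adjoin ℂ {T}, K.comap (W : H →ₗ[ℂ] H)

section maxReducingSubspace

variable {T : H →L[ℂ] H} {K : Submodule ℂ H}

theorem mem_maxReducingSubspace {x : H} :
    x ∈ maxReducingSubspace T K ↔ ∀ W ∈ StarAlgebra.adjoin ℂ {T}, W x ∈ K := by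
  simp [maxReducingSubspace, Submodule.mem_iInf]

theorem maxReducingSubspace_le : maxReducingSubspace T K ≤ K :=
  fun x hx ↦ by simpa using mem_maxReducingSubspace.mp hx 1 (one_mem _)

theorem isClosed_maxReducingSubspace (hK : IsClosed (K : Set H)) :
    IsClosed (maxReducingSubspace T K : Set H) := by
  simp only [maxReducingSubspace, Submodule.coe_iInf]
  exact isClosed_iInter fun W ↦ isClosed_iInter fun _ ↦ hK.preimage W.continuous

theorem reduces_maxReducingSubspace : Reduces T (maxReducingSubspace T K) := by
  intro x hx
  simp only [mem_maxReducingSubspace] at hx ⊢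
  refine ⟨fun W hW ↦ ?_, fun W hW ↦ ?_⟩
  · simpa using hx (W * T) (mul_mem hW (StarAlgebra.self_mem_adjoin_singleton ℂ T))
  · simpa [star_eq_adjoint] using hx (W * star T)
      (mul_mem hW (star_mem (StarAlgebra.self_mem_adjoin_singleton ℂ T)))

theorem Reduces.le_maxReducingSubspace {L : Submodule ℂ H} (hL : Reduces T L) (hLK : L ≤ K) :
    L ≤ maxReducingSubspace T K :=
  fun x hx ↦ mem_maxReducingSubspace.mpr fun _ hW ↦ hLK ((hL.of_mem_adjoin hW) x hx).1

theorem reduces_maxReducingSubspace_of_mem_centralizer {C : H →L[ℂ] H}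
    (hT : T ∈ StarSubalgebra.centralizer ℂ {C}) (hK : Reduces C K) :
    Reduces C (maxReducingSubspace T K) := by
  have hadj : StarAlgebra.adjoin ℂ {T} ≤ StarSubalgebra.centralizer ℂ {C} :=
    StarAlgebra.adjoin_le (Set.singleton_subset_iff.mpr hT)
  have hcomm (W) (hW : W ∈ StarAlgebra.adjoin ℂ {T}) :
      C * W = W * C ∧ star C * W = W * star C :=
    (StarSubalgebra.mem_centralizer_iff ℂ).mp (hadj hW) C rfl
  intro x hx
  simp only [mem_maxReducingSubspace] at hx ⊢
  refine ⟨fun W hW ↦ ?_, fun W hW ↦ ?_⟩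
  · rw [← mul_apply_eq_comp, ← (hcomm W hW).1, mul_apply_eq_comp]
    exact (hK _ (hx W hW)).1
  · rw [← star_eq_adjoint, ← mul_apply_eq_comp, ← (hcomm W hW).2, mul_apply_eq_comp]
    exact (hK _ (hx W hW)).2

end maxReducingSubspace

noncomputable def defectOp (r : ℝ) (T : H →L[ℂ] H) : H →L[ℂ] H :=
  algebraMap ℝ _ (1 + r ^ 2) - star T * T
    - algebraMap ℝ _ (r ^ 2) * (Ring.inverse T * star (Ring.inverse T))

theorem defectOp_nonneg {r : ℝ} {T : H →L[ℂ] H} (hT : MemC1r r T) : 0 ≤ defectOp r T := by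
  obtain ⟨hunit, hT1, hTinv⟩ := hT
  set P := star T * T
  set Q := Ring.inverse T * star (Ring.inverse T)
  set R := algebraMap ℝ (H →L[ℂ] H) (r ^ 2)
  have hinv : Ring.inverse T * T = 1 := Ring.inverse_mul_cancel T hunit
  have hinv' : star T * star (Ring.inverse T) = 1 := by
    rw [← star_mul, hinv, star_one]
  have hPQ : P * Q = 1 := by
    simp only [P, Q, ← mul_assoc, mul_assoc (star T) T, Ring.mul_inverse_cancel T hunit,
      mul_one, hinv']
  have hQP : Q * P = 1 := by
    simpa only [star_mul, star_star, star_one, mul_assoc, P, Q] using congrArg star hPQ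
  have hP1 : 0 ≤ 1 - P := sub_nonneg.mpr (CStarAlgebra.star_mul_le_one hT1)
  have hPR : 0 ≤ P - R := by
    rw [sub_nonneg]
    convert star_left_conjugate_le_conjugate (CStarAlgebra.star_mul_le_one hTinv) T using 1
    · simp only [star_smul, Complex.star_def, Complex.conj_ofReal, mul_smul_comm, smul_mul_assoc,
        ← mul_assoc, hinv', one_mul, hinv, R]
      rw [Algebra.algebraMap_eq_smul_one, smul_smul, ← Complex.ofReal_mul, ← sq, Complex.coe_smul]
    · simp [P]
  have hQ : 0 ≤ Q := mul_star_self_nonneg _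
  have hPQc : Commute P Q := hPQ.trans hQP.symm
  have hfactor : defectOp r T = (1 - P) * (P - R) * Q := by
    change algebraMap ℝ _ (1 + r ^ 2) - P - R * Q = _
    simp only [R, Algebra.algebraMap_eq_smul_one, sub_mul, mul_sub, one_mul, mul_one,
      smul_mul_assoc, mul_smul_comm, mul_assoc, hPQ]
    module
  rw [hfactor]
  refine Commute.mul_nonneg (Commute.mul_nonneg hP1 hPR ?_) hQ ?_
  · exact ((Commute.one_left P).sub_left (Commute.refl P)).sub_right
      (Algebra.commute_algebraMap_right _ _)
  · exact ((Commute.one_left Q).sub_left hPQc).mul_left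
      (hPQc.sub_left (Algebra.commute_algebraMap_left _ _))

theorem re_inner_defectOp_apply_self (r : ℝ) (T : H →L[ℂ] H) (x : H) :
    RCLike.re (inner ℂ (defectOp r T x) x) = (1 + r ^ 2) * ‖x‖ ^ 2 - ‖T x‖ ^ 2
      - r ^ 2 * ‖adjoint (Ring.inverse T) x‖ ^ 2 := by
  have hT : inner ℂ (adjoint T (T x)) x = inner ℂ (T x) (T x) := adjoint_inner_left T x (T x)
  have hS (S : H →L[ℂ] H) : inner ℂ (S (adjoint S x)) x = inner ℂ (adjoint S x) (adjoint S x) :=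
    (adjoint_inner_right S (adjoint S x) x).symm
  simp only [defectOp, sub_apply, mul_apply_eq_comp, ContinuousLinearMap.algebraMap_apply,
    star_eq_adjoint, inner_sub_left, ← Complex.coe_smul, inner_smul_left, Complex.conj_ofReal,
    hT, hS, inner_self_eq_norm_sq_to_K, map_sub, RCLike.re_to_complex, Complex.re_ofReal_mul]
  norm_cast

theorem restrictedScriptC1r_iff_le_ker {r : ℝ} {T : H →L[ℂ] H} (hD : 0 ≤ defectOp r T)
    {L : Submodule ℂ H} :
    RestrictedScriptC1r r T L ↔ L ≤ LinearMap.ker (defectOp r T : H →ₗ[ℂ] H) := by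
  refine forall₂_congr fun x _ ↦ ?_
  rw [LinearMap.mem_ker, coe_coe, ← re_inner_apply_self_eq_zero_iff hD,
    re_inner_defectOp_apply_self]
  constructor <;> intro h <;> linarith

theorem defectOp_mem_centralizer {r : ℝ} {T : H →L[ℂ] H} {s : Set (H →L[ℂ] H)}
    (hT : T ∈ StarSubalgebra.centralizer ℂ s) :
    defectOp r T ∈ StarSubalgebra.centralizer ℂ s := by
  have hR (c : ℝ) : algebraMap ℝ (H →L[ℂ] H) c ∈ StarSubalgebra.centralizer ℂ s := by
    rw [IsScalarTower.algebraMap_apply ℝ ℂ]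
    exact algebraMap_mem _ _
  have hinv := StarSubalgebra.ringInverse_mem_centralizer hT
  exact sub_mem (sub_mem (hR _) (mul_mem (star_mem hT) hT))
    (mul_mem (hR _) (mul_mem hinv (star_mem hinv)))

theorem stmt15_general (r : ℝ) (A B : H →L[ℂ] H) (hAmem : MemC1r r A)
    (hcomm : A * B = B * A) (hcomm' : A * adjoint B = adjoint B * A)
    (H₁ : Submodule ℂ H) (hred : Reduces A H₁) (hres : RestrictedScriptC1r r A H₁)
    (hmax : ∀ L : Submodule ℂ H, IsClosed (L : Set H) → Reduces A L →
      RestrictedScriptC1r r A L → L ≤ H₁) :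
    Reduces B H₁ ∧ Reduces B H₁ᗮ := by
  have hD := defectOp_nonneg hAmem
  have hH₁ : maxReducingSubspace A (LinearMap.ker (defectOp r A : H →ₗ[ℂ] H)) = H₁ :=
    le_antisymm
      (hmax _ (isClosed_maxReducingSubspace (isClosed_ker _)) reduces_maxReducingSubspace
        ((restrictedScriptC1r_iff_le_ker hD).mpr maxReducingSubspace_le))
      (hred.le_maxReducingSubspace ((restrictedScriptC1r_iff_le_ker hD).mp hres))
  have hAB : A ∈ StarSubalgebra.centralizer ℂ {B} :=
    (StarSubalgebra.mem_centralizer_iff ℂ).mpr fun _ hg ↦ hg ▸ ⟨hcomm.symm, hcomm'.symm⟩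
  have hB₁ : Reduces B H₁ := hH₁ ▸ reduces_maxReducingSubspace_of_mem_centralizer hAB
    (reduces_ker_of_mem_centralizer (defectOp_mem_centralizer hAB))
  exact ⟨hB₁, hB₁.orthogonal⟩

theorem stmt15 (r : ℝ) (hr0 : 0 < r) (hr1 : r < 1) (A B : H →L[ℂ] H)
    (hA : IsUnit A) (hB : IsUnit B) (hAmem : MemC1r r A) (hBmem : MemC1r r B)
    (hcomm : A * B = B * A) (hcomm' : A * adjoint B = adjoint B * A)
    (H₁ : Submodule ℂ H) (hclosed : IsClosed (H₁ : Set H)) (hred : Reduces A H₁)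
    (hres : RestrictedScriptC1r r A H₁)
    (hmax : ∀ L : Submodule ℂ H, IsClosed (L : Set H) → Reduces A L →
      RestrictedScriptC1r r A L → L ≤ H₁) :
    Reduces B H₁ ∧ Reduces B H₁ᗮ :=
  stmt15_general r A B hAmem hcomm hcomm' H₁ hred hres hmax
end
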